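/- The simplicial complex Δₙ (n ≥ 4) defined by the stated minimal nonfaces has exactly n(n−1)·3^{n−1} facets with profile a permutation of (3,2,1,1,…,1) and C(n,3)·3ⁿ facets with profile a permutation of (2,2,2,1,…,1), hence n(n−1)·3^{n−1} + C(n,3)·3ⁿ facets in total. -/

import Mathlib

open Finset

/-!
Write `excess c = ∑ᵢ (cᵢ - 1)` for a profile `c`. Every minimal nonface has excess `4`, and a
profile bounded by `3` with excess at least `4` dominates the profile of a minimal nonface, so `U`
is a face iff the excess of its profile is at most `3`. Adding `x_{ij}` to `U` raises the excess
by one unless row `i` is empty; hence, once `n ≥ 2`, the facets are the sets with no empty row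
and excess exactly `3`, i.e. with profile a permutation of `(3,2,1,…,1)` or `(2,2,2,1,…,1)`.
Finally, exactly `∏ᵢ C(3, cᵢ)` sets have a given profile `c`.
-/

/-- The profile of a subset `U` of the ground set `{x_{ij}} = Fin n × Fin 3`:
`profile U i` is the number of `j` with `x_{ij} ∈ U`. -/
def profileOf {n : ℕ} (U : Finset (Fin n × Fin 3)) (i : Fin n) : ℕ :=
  (U.filter (fun p => p.1 = i)).card

/-- A profile is *bad* if, up to permutation of the indices, it equals
`(3,3,0,…,0)`, `(3,2,2,0,…,0)` or `(2,2,2,2,0,…,0)`. -/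
def IsBadProfile {n : ℕ} (c : Fin n → ℕ) : Prop :=
  (∃ i j, i ≠ j ∧ c i = 3 ∧ c j = 3 ∧ ∀ k, k ≠ i → k ≠ j → c k = 0) ∨
  (∃ i j k, i ≠ j ∧ i ≠ k ∧ j ≠ k ∧ c i = 3 ∧ c j = 2 ∧ c k = 2 ∧
    ∀ l, l ≠ i → l ≠ j → l ≠ k → c l = 0) ∨
  (∃ i j k l, i ≠ j ∧ i ≠ k ∧ i ≠ l ∧ j ≠ k ∧ j ≠ l ∧ k ≠ l ∧
    c i = 2 ∧ c j = 2 ∧ c k = 2 ∧ c l = 2 ∧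
    ∀ m, m ≠ i → m ≠ j → m ≠ k → m ≠ l → c m = 0)

/-- `U` is a face of the simplicial complex `Δₙ`: it contains no (minimal)
nonface, i.e. no subset whose profile is bad. -/
def IsFaceD (n : ℕ) (U : Finset (Fin n × Fin 3)) : Prop :=
  ¬ ∃ W : Finset (Fin n × Fin 3), W ⊆ U ∧ IsBadProfile (profileOf W)

/-- `U` is a facet (maximal face) of `Δₙ`. -/
def IsFacetD (n : ℕ) (U : Finset (Fin n × Fin 3)) : Prop :=
  IsFaceD n U ∧ ∀ W : Finset (Fin n × Fin 3), IsFaceD n W → U ⊆ W → W = U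

/-- A profile is a permutation of `(3,2,1,1,…,1)`. -/
def IsProfile321 {n : ℕ} (c : Fin n → ℕ) : Prop :=
  ∃ i j, i ≠ j ∧ c i = 3 ∧ c j = 2 ∧ ∀ k, k ≠ i → k ≠ j → c k = 1

/-- A profile is a permutation of `(2,2,2,1,…,1)`. -/
def IsProfile2221 {n : ℕ} (c : Fin n → ℕ) : Prop :=
  ∃ i j k, i ≠ j ∧ i ≠ k ∧ j ≠ k ∧ c i = 2 ∧ c j = 2 ∧ c k = 2 ∧
    ∀ l, l ≠ i → l ≠ j → l ≠ k → c l = 1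

section

variable {n : ℕ}

def rowsEquiv (n : ℕ) : Finset (Fin n × Fin 3) ≃ (Fin n → Finset (Fin 3)) where
  toFun U i := {j | (i, j) ∈ U}
  invFun f := {p | p.2 ∈ f p.1}
  left_inv U := by ext p; simp
  right_inv f := by ext i j; simp

theorem profileOf_eq_card_rowsEquiv (U : Finset (Fin n × Fin 3)) (i : Fin n) :
    profileOf U i = #(rowsEquiv n U i) := by
  have : U.filter (·.1 = i) =
      (rowsEquiv n U i).map ⟨Prod.mk i, Prod.mk_right_injective i⟩ := by
    ext ⟨k, j⟩
    simp only [mem_filter, mem_map, rowsEquiv, Equiv.coe_fn_mk, Function.Embedding.coeFn_mk]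
    aesop
  rw [profileOf, this, card_map]

theorem profileOf_le_three (U : Finset (Fin n × Fin 3)) (i : Fin n) : profileOf U i ≤ 3 := by
  simpa [profileOf_eq_card_rowsEquiv] using card_le_univ (rowsEquiv n U i)

theorem profileOf_mono {U V : Finset (Fin n × Fin 3)} (h : U ⊆ V) : profileOf U ≤ profileOf V :=
  fun _ => card_le_card (filter_subset_filter _ h)

theorem exists_subset_profileOf_eq {U : Finset (Fin n × Fin 3)} {d : Fin n → ℕ}
    (hd : d ≤ profileOf U) : ∃ W ⊆ U, profileOf W = d := by
  choose T hTU hT using fun i =>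
    exists_subset_card_eq ((profileOf_eq_card_rowsEquiv U i) ▸ hd i)
  refine ⟨(rowsEquiv n).symm T, fun p hp => ?_, funext fun i => ?_⟩
  · simpa [rowsEquiv] using hTU p.1 (by simpa [rowsEquiv] using hp)
  · rw [profileOf_eq_card_rowsEquiv, Equiv.apply_symm_apply, hT]

theorem profileOf_insert {U : Finset (Fin n × Fin 3)} {p : Fin n × Fin 3} (hp : p ∉ U) :
    profileOf (insert p U) = Function.update (profileOf U) p.1 (profileOf U p.1 + 1) := by
  funext k
  rcases eq_or_ne k p.1 with rfl | hk
  · rw [Function.update_self, profileOf, filter_insert, if_pos rfl,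
      card_insert_of_notMem (fun h => hp (mem_filter.1 h).1), profileOf]
  · rw [Function.update_of_ne hk, profileOf, filter_insert, if_neg (Ne.symm hk), profileOf]

theorem exists_notMem_of_profileOf_lt {U : Finset (Fin n × Fin 3)} {i : Fin n}
    (h : profileOf U i < 3) : ∃ j, (i, j) ∉ U := by
  rw [profileOf_eq_card_rowsEquiv] at h
  obtain ⟨j, -, hj⟩ :=
    exists_mem_notMem_of_card_lt_card (s := rowsEquiv n U i) (t := univ) (by rwa [card_fin])
  exact ⟨j, by simpa [rowsEquiv] using hj⟩

/-- Truncated subtraction: the entries `0` and `1` contribute nothing. -/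
def excess (c : Fin n → ℕ) : ℕ := ∑ i, (c i - 1)

theorem excess_mono {c c' : Fin n → ℕ} (h : c ≤ c') : excess c ≤ excess c' :=
  sum_le_sum fun i _ => Nat.sub_le_sub_right (h i) 1

theorem sum_le_excess (c : Fin n → ℕ) (s : Finset (Fin n)) : ∑ i ∈ s, (c i - 1) ≤ excess c :=
  sum_le_sum_of_subset (subset_univ s)

theorem excess_eq_sum_of_le_one {c : Fin n → ℕ} {s : Finset (Fin n)} (h : ∀ i ∉ s, c i ≤ 1) :
    excess c = ∑ i ∈ s, (c i - 1) :=
  (sum_subset (subset_univ s) fun i _ hi => Nat.sub_eq_zero_of_le (h i hi)).symm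

theorem excess_eq_card {c : Fin n → ℕ} (hc : ∀ i, c i ≤ 3) :
    excess c = 2 * #{i | c i = 3} + #{i | c i = 2} := by
  simp only [excess, card_filter, mul_sum, ← sum_add_distrib]
  refine sum_congr rfl fun i _ => ?_
  have := hc i
  interval_cases c i <;> rfl

theorem excess_update_add (c : Fin n → ℕ) (i : Fin n) (v : ℕ) :
    excess (Function.update c i v) + (c i - 1) = excess c + (v - 1) := by
  simp only [excess, ← add_sum_erase univ _ (mem_univ i), Function.update_self]
  rw [sum_congr rfl fun k hk => by rw [Function.update_of_ne (ne_of_mem_erase hk)]]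
  ring

theorem four_le_excess_of_isBadProfile {d : Fin n → ℕ} (h : IsBadProfile d) :
    4 ≤ excess d := by
  rcases h with ⟨i, j, hij, hi, hj, -⟩ | ⟨i, j, k, hij, hik, hjk, hi, hj, hk, -⟩ |
    ⟨i, j, k, l, hij, hik, hil, hjk, hjl, hkl, hi, hj, hk, hl, -⟩
  · simpa [hij, hi, hj] using sum_le_excess d {i, j}
  · simpa [hij, hik, hjk, hi, hj, hk] using sum_le_excess d {i, j, k}
  · simpa [hij, hik, hil, hjk, hjl, hkl, hi, hj, hk, hl] using sum_le_excess d {i, j, k, l}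

theorem exists_isBadProfile_le {c : Fin n → ℕ} (hc : ∀ i, c i ≤ 3) (h : 4 ≤ excess c) :
    ∃ d ≤ c, IsBadProfile d := by
  rw [excess_eq_card hc] at h
  set A : Finset (Fin n) := {i | c i = 3}
  set B : Finset (Fin n) := {i | c i = 2}
  have hA : ∀ i ∈ A, c i = 3 := fun i hi => (mem_filter.1 hi).2
  have hB : ∀ i ∈ B, c i = 2 := fun i hi => (mem_filter.1 hi).2
  have restrict_le (s : Finset (Fin n)) : s.piecewise c 0 ≤ c :=
    s.piecewise_le_of_le_of_le le_rfl fun _ => Nat.zero_le _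
  obtain hA2 | ⟨hA1, hB2⟩ | hB4 : 2 ≤ #A ∨ (1 ≤ #A ∧ 2 ≤ #B) ∨ 4 ≤ #B := by omega
  · obtain ⟨i, hi, j, hj, hij⟩ := one_lt_card.1 hA2
    exact ⟨({i, j} : Finset (Fin n)).piecewise c 0, restrict_le _, Or.inl ⟨i, j, hij,
      by simp [hA i hi], by simp [hA j hj], fun k hki hkj => by simp [hki, hkj]⟩⟩
  · obtain ⟨i, hi⟩ := card_pos.1 hA1
    obtain ⟨j, hj, k, hk, hjk⟩ := one_lt_card.1 hB2
    have hij : i ≠ j := by rintro rfl; have := hA i hi; have := hB i hj; omega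
    have hik : i ≠ k := by rintro rfl; have := hA i hi; have := hB i hk; omega
    exact ⟨({i, j, k} : Finset (Fin n)).piecewise c 0, restrict_le _,
      Or.inr (Or.inl ⟨i, j, k, hij, hik, hjk, by simp [hA i hi], by simp [hB j hj],
        by simp [hB k hk], fun l hli hlj hlk => by simp [hli, hlj, hlk]⟩)⟩
  · obtain ⟨l, hl⟩ : B.Nonempty := card_pos.1 (by omega)
    obtain ⟨i, hi, j, hj, k, hk, hij, hik, hjk⟩ :=
      two_lt_card.1 (show 2 < #(B.erase l) by rw [card_erase_of_mem hl]; omega)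
    obtain ⟨hil, hi⟩ := mem_erase.1 hi
    obtain ⟨hjl, hj⟩ := mem_erase.1 hj
    obtain ⟨hkl, hk⟩ := mem_erase.1 hk
    exact ⟨({i, j, k, l} : Finset (Fin n)).piecewise c 0, restrict_le _,
      Or.inr (Or.inr ⟨i, j, k, l, hij, hik, hil, hjk, hjl, hkl, by simp [hB i hi],
        by simp [hB j hj], by simp [hB k hk], by simp [hB l hl],
        fun m hmi hmj hmk hml => by simp [hmi, hmj, hmk, hml]⟩)⟩

theorem isFaceD_iff_excess_le (U : Finset (Fin n × Fin 3)) :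
    IsFaceD n U ↔ excess (profileOf U) ≤ 3 := by
  constructor
  · intro hU
    by_contra! h
    obtain ⟨d, hdU, hd⟩ := exists_isBadProfile_le (profileOf_le_three U) h
    obtain ⟨W, hWU, rfl⟩ := exists_subset_profileOf_eq hdU
    exact hU ⟨W, hWU, hd⟩
  · rintro h ⟨W, hWU, hW⟩
    have := excess_mono (profileOf_mono hWU)
    have := four_le_excess_of_isBadProfile hW
    omega

theorem IsFaceD.mono {U V : Finset (Fin n × Fin 3)} (hV : IsFaceD n V) (h : U ⊆ V) :
    IsFaceD n U :=
  fun ⟨W, hWU, hW⟩ => hV ⟨W, hWU.trans h, hW⟩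

theorem isFacetD_iff_forall_insert (U : Finset (Fin n × Fin 3)) :
    IsFacetD n U ↔ IsFaceD n U ∧ ∀ p ∉ U, ¬ IsFaceD n (insert p U) := by
  refine and_congr_right fun _ => ⟨fun hmax p hp hface => ?_, fun h W hW hUW => ?_⟩
  · exact hp (hmax _ hface (subset_insert p U) ▸ mem_insert_self p U)
  · by_contra hne
    obtain ⟨p, hpW, hpU⟩ := exists_of_ssubset (hUW.ssubset_of_ne (Ne.symm hne))
    exact h p hpU (IsFaceD.mono hW (insert_subset hpW hUW))

theorem excess_profileOf_insert {U : Finset (Fin n × Fin 3)} {i : Fin n} {j : Fin 3}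
    (hij : (i, j) ∉ U) :
    excess (profileOf (insert (i, j) U)) + (profileOf U i - 1) =
      excess (profileOf U) + profileOf U i := by
  rw [profileOf_insert hij, excess_update_add, Nat.add_sub_cancel]

theorem isFacetD_iff_excess_eq (hn : 2 ≤ n) (U : Finset (Fin n × Fin 3)) :
    IsFacetD n U ↔ (∀ i, 1 ≤ profileOf U i) ∧ excess (profileOf U) = 3 := by
  simp only [isFacetD_iff_forall_insert, isFaceD_iff_excess_le, not_le]
  constructor
  · rintro ⟨hface, hmax⟩
    have grow : ∀ i, profileOf U i < 3 →
        3 < excess (profileOf U) + profileOf U i - (profileOf U i - 1) := fun i hi => by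
      obtain ⟨j, hj⟩ := exists_notMem_of_profileOf_lt hi
      have := hmax _ hj
      have := excess_profileOf_insert hj
      omega
    have hpos : ∀ i, 1 ≤ profileOf U i := fun i => by
      by_contra! h0
      have := grow i (by omega)
      omega
    refine ⟨hpos, le_antisymm hface (by_contra fun hlt => ?_)⟩
    obtain ⟨i, hi⟩ : ∃ i, profileOf U i < 3 := by
      by_contra! hfull
      have : ∑ _i : Fin n, 2 ≤ excess (profileOf U) :=
        sum_le_sum fun i _ => Nat.le_sub_one_of_lt (hfull i)
      simp only [sum_const, card_univ, Fintype.card_fin, smul_eq_mul] at this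
      omega
    have := grow i hi
    have := hpos i
    omega
  · rintro ⟨hpos, hc⟩
    refine ⟨hc.le, fun ⟨i, j⟩ hij => ?_⟩
    have := excess_profileOf_insert hij
    have := hpos i
    omega

section Classification

variable {c : Fin n → ℕ}

theorem IsProfile321.one_le (h : IsProfile321 c) (k : Fin n) : 1 ≤ c k := by
  obtain ⟨i, j, -, hi, hj, hrest⟩ := h
  by_cases hki : k = i
  · subst hki; omega
  by_cases hkj : k = j
  · subst hkj; omega
  · rw [hrest k hki hkj]

theorem IsProfile321.excess_eq (h : IsProfile321 c) : excess c = 3 := by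
  obtain ⟨i, j, hij, hi, hj, hrest⟩ := h
  rw [excess_eq_sum_of_le_one (s := {i, j}) fun k hk => by
    simp only [mem_insert, mem_singleton, not_or] at hk
    rw [hrest k hk.1 hk.2]]
  simp [hij, hi, hj]

theorem IsProfile2221.one_le (h : IsProfile2221 c) (l : Fin n) : 1 ≤ c l := by
  obtain ⟨i, j, k, -, -, -, hi, hj, hk, hrest⟩ := h
  by_cases hli : l = i
  · subst hli; omega
  by_cases hlj : l = j
  · subst hlj; omega
  by_cases hlk : l = k
  · subst hlk; omega
  · rw [hrest l hli hlj hlk]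

theorem IsProfile2221.excess_eq (h : IsProfile2221 c) : excess c = 3 := by
  obtain ⟨i, j, k, hij, hik, hjk, hi, hj, hk, hrest⟩ := h
  rw [excess_eq_sum_of_le_one (s := {i, j, k}) fun l hl => by
    simp only [mem_insert, mem_singleton, not_or] at hl
    rw [hrest l hl.1 hl.2.1 hl.2.2]]
  simp [hij, hik, hjk, hi, hj, hk]

theorem isProfile321_or_isProfile2221_of_excess_eq (hpos : ∀ i, 1 ≤ c i) (hc : ∀ i, c i ≤ 3)
    (he : excess c = 3) : IsProfile321 c ∨ IsProfile2221 c := by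
  rw [excess_eq_card hc] at he
  have hone : ∀ k, c k ≠ 3 → c k ≠ 2 → c k = 1 := fun k h3 h2 => by
    have := hpos k
    have := hc k
    omega
  obtain ⟨hA, hB⟩ | ⟨hA, hB⟩ : (#{i | c i = 3} = 1 ∧ #{i | c i = 2} = 1) ∨
      (#{i | c i = 3} = 0 ∧ #{i | c i = 2} = 3) := by omega
  · obtain ⟨i, hi⟩ := card_eq_one.1 hA
    obtain ⟨j, hj⟩ := card_eq_one.1 hB
    have h3 : ∀ k, c k = 3 ↔ k = i := fun k => by simpa using Finset.ext_iff.1 hi k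
    have h2 : ∀ k, c k = 2 ↔ k = j := fun k => by simpa using Finset.ext_iff.1 hj k
    refine Or.inl ⟨i, j, ?_, (h3 i).2 rfl, (h2 j).2 rfl, fun k hki hkj =>
      hone k (mt (h3 k).1 hki) (mt (h2 k).1 hkj)⟩
    rintro rfl
    have := (h3 i).2 rfl
    have := (h2 i).2 rfl
    omega
  · obtain ⟨i, j, k, hij, hik, hjk, hijk⟩ := card_eq_three.1 hB
    have h3 : ∀ l, c l ≠ 3 := by simpa [filter_eq_empty_iff] using hA
    have h2 : ∀ l, c l = 2 ↔ l = i ∨ l = j ∨ l = k := fun l => by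
      simpa using Finset.ext_iff.1 hijk l
    exact Or.inr ⟨i, j, k, hij, hik, hjk, by simp [h2], by simp [h2], by simp [h2],
      fun l hli hlj hlk => hone l (h3 l) (by simp [h2, hli, hlj, hlk])⟩

end Classification

theorem isFacetD_iff_isProfile (hn : 2 ≤ n) (U : Finset (Fin n × Fin 3)) :
    IsFacetD n U ↔ IsProfile321 (profileOf U) ∨ IsProfile2221 (profileOf U) := by
  rw [isFacetD_iff_excess_eq hn]
  refine ⟨fun ⟨hpos, he⟩ =>
    isProfile321_or_isProfile2221_of_excess_eq hpos (profileOf_le_three U) he, ?_⟩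
  rintro (h | h)
  · exact ⟨h.one_le, h.excess_eq⟩
  · exact ⟨h.one_le, h.excess_eq⟩

theorem card_filter_profileOf_eq (d : Fin n → ℕ) :
    #{U : Finset (Fin n × Fin 3) | profileOf U = d} = ∏ i, (3).choose (d i) := by
  have : ({U | profileOf U = d} : Finset (Finset (Fin n × Fin 3))).map (rowsEquiv n).toEmbedding
      = Fintype.piFinset fun i => powersetCard (d i) univ := by
    ext f
    simp [mem_map_equiv, funext_iff, profileOf_eq_card_rowsEquiv]
  rw [← card_map, this, Fintype.card_piFinset]
  simp [card_powersetCard]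

theorem ncard_setOf_profileOf_mem (S : Finset (Fin n → ℕ)) :
    {U : Finset (Fin n × Fin 3) | profileOf U ∈ S}.ncard = ∑ d ∈ S, ∏ i, (3).choose (d i) := by
  rw [← coe_filter_univ, Set.ncard_coe_finset,
    card_eq_sum_card_fiberwise (s := {U | profileOf U ∈ S}) (t := S) fun U hU => by simpa using hU]
  refine sum_congr rfl fun d hd => ?_
  rw [← card_filter_profileOf_eq, filter_filter]
  exact congrArg card (filter_congr fun U _ => and_iff_right_of_imp fun h => h ▸ hd)

def profile321 (p : Fin n × Fin n) (k : Fin n) : ℕ :=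
  if k = p.1 then 3 else if k = p.2 then 2 else 1

def profiles321 (n : ℕ) : Finset (Fin n → ℕ) := univ.offDiag.image profile321

def profile2221 (s : Finset (Fin n)) (k : Fin n) : ℕ := if k ∈ s then 2 else 1

def profiles2221 (n : ℕ) : Finset (Fin n → ℕ) := (powersetCard 3 univ).image profile2221

theorem mem_profiles321 {c : Fin n → ℕ} : c ∈ profiles321 n ↔ IsProfile321 c := by
  simp only [profiles321, mem_image, mem_offDiag, mem_univ, true_and, Prod.exists]
  constructor
  · rintro ⟨i, j, hij, rfl⟩
    exact ⟨i, j, hij, by simp [profile321], by simp [profile321, Ne.symm hij],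
      fun k hki hkj => by simp [profile321, hki, hkj]⟩
  · rintro ⟨i, j, hij, hi, hj, hrest⟩
    refine ⟨i, j, hij, funext fun k => ?_⟩
    by_cases hki : k = i
    · subst hki; simp [profile321, hi]
    by_cases hkj : k = j
    · subst hkj; simp [profile321, hj, hki]
    · simp [profile321, hki, hkj, hrest k hki hkj]

theorem mem_profiles2221 {c : Fin n → ℕ} : c ∈ profiles2221 n ↔ IsProfile2221 c := by
  simp only [profiles2221, mem_image, mem_powersetCard_univ]
  constructor
  · rintro ⟨s, hs, rfl⟩
    obtain ⟨i, j, k, hij, hik, hjk, rfl⟩ := card_eq_three.1 hs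
    exact ⟨i, j, k, hij, hik, hjk, by simp [profile2221], by simp [profile2221],
      by simp [profile2221], fun l hli hlj hlk => by simp [profile2221, hli, hlj, hlk]⟩
  · rintro ⟨i, j, k, hij, hik, hjk, hi, hj, hk, hrest⟩
    refine ⟨{i, j, k}, card_eq_three.2 ⟨i, j, k, hij, hik, hjk, rfl⟩, funext fun l => ?_⟩
    by_cases hl : l = i ∨ l = j ∨ l = k
    · rcases hl with rfl | rfl | rfl <;> simp [profile2221, *]
    · simp only [not_or] at hl
      simp [profile2221, hl, hrest l hl.1 hl.2.1 hl.2.2]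

theorem profile321_injOn :
    Set.InjOn profile321 ((univ : Finset (Fin n)).offDiag : Set (Fin n × Fin n)) := by
  rintro ⟨i, j⟩ hij ⟨i', j'⟩ - h
  have hi := congr_fun h i
  have hj := congr_fun h j
  simp only [mem_coe, mem_offDiag] at hij
  simp only [profile321] at hi hj
  split_ifs at hi hj <;> simp_all

theorem profile2221_injective : Function.Injective (profile2221 (n := n)) := by
  intro s t h
  ext k
  have hk := congr_fun h k
  simp only [profile2221] at hk
  split_ifs at hk <;> simp_all

theorem disjoint_profiles321_profiles2221 : Disjoint (profiles321 n) (profiles2221 n) := by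
  simp only [disjoint_left, profiles321, profiles2221, mem_image, not_exists, not_and]
  rintro _ ⟨⟨i, j⟩, -, rfl⟩ s - h
  have hi := congr_fun h i
  simp only [profile321, profile2221] at hi
  split_ifs at hi <;> simp_all

theorem sum_prod_choose_profiles321 :
    ∑ d ∈ profiles321 n, ∏ k, (3).choose (d k) = n * (n - 1) * 3 ^ (n - 1) := by
  have hprod : ∀ p : Fin n × Fin n, ∏ k, (3).choose (profile321 p k) = 3 ^ (n - 1) := fun p => by
    rw [prod_congr rfl fun k _ => show (3).choose (profile321 p k) = if k = p.1 then 1 else 3 by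
      unfold profile321; split_ifs <;> rfl]
    simp [prod_ite, filter_ne']
  rw [profiles321, sum_image profile321_injOn, sum_congr rfl fun p _ => hprod p, sum_const,
    offDiag_card, card_univ, Fintype.card_fin, smul_eq_mul, ← Nat.mul_sub_one]

theorem sum_prod_choose_profiles2221 :
    ∑ d ∈ profiles2221 n, ∏ k, (3).choose (d k) = n.choose 3 * 3 ^ n := by
  have hprod : ∀ s : Finset (Fin n), ∏ k, (3).choose (profile2221 s k) = 3 ^ n := fun s => by
    rw [prod_congr rfl fun k _ => show (3).choose (profile2221 s k) = 3 by
      unfold profile2221; split_ifs <;> rfl]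
    simp
  rw [profiles2221, sum_image fun s _ t _ h => profile2221_injective h,
    sum_congr rfl fun s _ => hprod s, sum_const, card_powersetCard, card_univ, Fintype.card_fin,
    smul_eq_mul]

end

/-- Facet counts of `Δₙ` (`n ≥ 4`): there are `n(n-1)·3^(n-1)` facets with
profile a permutation of `(3,2,1,…,1)`, `C(n,3)·3ⁿ` facets with profile a
permutation of `(2,2,2,1,…,1)`, and these are all the facets. -/
theorem facet_counts_of_Delta_n (n : ℕ) (hn : 4 ≤ n) :
    {U : Finset (Fin n × Fin 3) | IsFacetD n U ∧ IsProfile321 (profileOf U)}.ncard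
        = n * (n - 1) * 3 ^ (n - 1) ∧
    {U : Finset (Fin n × Fin 3) | IsFacetD n U ∧ IsProfile2221 (profileOf U)}.ncard
        = n.choose 3 * 3 ^ n ∧
    {U : Finset (Fin n × Fin 3) | IsFacetD n U}.ncard
        = n * (n - 1) * 3 ^ (n - 1) + n.choose 3 * 3 ^ n := by
  have hfacet (U : Finset (Fin n × Fin 3)) :
      IsFacetD n U ↔ profileOf U ∈ profiles321 n ∨ profileOf U ∈ profiles2221 n := by
    rw [isFacetD_iff_isProfile (by omega), mem_profiles321, mem_profiles2221]
  have h321 : {U : Finset (Fin n × Fin 3) | IsFacetD n U ∧ IsProfile321 (profileOf U)} =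
      {U | profileOf U ∈ profiles321 n} :=
    Set.ext fun U => ⟨fun h => mem_profiles321.2 h.2,
      fun h => ⟨(hfacet U).2 (Or.inl h), mem_profiles321.1 h⟩⟩
  have h2221 : {U : Finset (Fin n × Fin 3) | IsFacetD n U ∧ IsProfile2221 (profileOf U)} =
      {U | profileOf U ∈ profiles2221 n} :=
    Set.ext fun U => ⟨fun h => mem_profiles2221.2 h.2,
      fun h => ⟨(hfacet U).2 (Or.inr h), mem_profiles2221.1 h⟩⟩
  have hall : {U : Finset (Fin n × Fin 3) | IsFacetD n U} =
      {U | profileOf U ∈ profiles321 n ∪ profiles2221 n} :=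
    Set.ext fun U => (hfacet U).trans mem_union.symm
  rw [h321, h2221, hall, ncard_setOf_profileOf_mem, ncard_setOf_profileOf_mem,
    ncard_setOf_profileOf_mem, sum_union disjoint_profiles321_profiles2221,
    sum_prod_choose_profiles321, sum_prod_choose_profiles2221]
  exact ⟨rfl, rfl, rfl⟩
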